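/- arXiv:2211.11859 — 2 statements merged into one kernel-verified Lean document; each statement's English description precedes it below -/
import Mathlib

section
/- For all real parameters m > 0, k > 0, γ̄ > 0 and every x > 0, the conditional SNR density of the fdRLoS channel integrates to one: ∫₀^∞ f(γ|x) dγ = 1. -/
open MeasureTheory Set

/-- Pochhammer symbol (rising factorial) `(m)_i = m(m+1)⋯(m+i−1)`. -/
noncomputable def poch (m : ℝ) (i : ℕ) : ℝ := ∏ j ∈ Finset.range i, (m + j)

lemma poch_zero (m : ℝ) : poch m 0 = 1 := by simp [poch]

lemma poch_succ (m : ℝ) (i : ℕ) : poch m (i + 1) = poch m i * (m + i) := by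
  simp [poch, Finset.prod_range_succ]

lemma poch_pos {m : ℝ} (hm : 0 < m) (i : ℕ) : 0 < poch m i := by
  induction i with
  | zero => simp [poch_zero]
  | succ n ih => rw [poch_succ]; positivity

lemma Gamma_add_nat {m : ℝ} (hm : 0 < m) (i : ℕ) :
    Real.Gamma (m + i) = poch m i * Real.Gamma m := by
  induction i with
  | zero => simp [poch_zero]
  | succ n ih =>
    have h : m + (n + 1 : ℕ) = (m + n) + 1 := by push_cast; ring
    rw [h, Real.Gamma_add_one (by positivity), ih, poch_succ]; ring

lemma summable_poch {m t : ℝ} (hm : 0 < m) (ht0 : 0 ≤ t) (ht1 : t < 1) :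
    Summable (fun i : ℕ => poch m i / (Nat.factorial i : ℝ) * t ^ i) := by
  set r : ℝ := (1 + t) / 2 with hr
  have htr : t < r := by rw [hr]; linarith
  have hr1 : r < 1 := by rw [hr]; linarith
  have hr0 : 0 < r := by rw [hr]; linarith
  apply summable_of_ratio_norm_eventually_le hr1
  filter_upwards [Filter.eventually_ge_atTop ⌈m * t / (r - t)⌉₊] with n hn
  have hn' : m * t / (r - t) ≤ (n : ℝ) := by
    calc m * t / (r - t) ≤ (⌈m * t / (r - t)⌉₊ : ℝ) := Nat.le_ceil _
    _ ≤ n := by exact_mod_cast hn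
  have hkey : (m + n) * t ≤ r * (n + 1) := by
    have h1 : m * t ≤ (r - t) * ((n : ℝ)) + r := by
      have := (div_le_iff₀ (by linarith)).mp hn'
      nlinarith
    nlinarith [mul_le_mul_of_nonneg_left (le_of_lt htr) (Nat.cast_nonneg n : (0:ℝ) ≤ n)]
  have hterm : poch m (n + 1) / (Nat.factorial (n + 1) : ℝ) * t ^ (n + 1)
      = (poch m n / (Nat.factorial n : ℝ) * t ^ n) * ((m + n) * t / (n + 1)) := by
    rw [poch_succ, Nat.factorial_succ, pow_succ]
    push_cast
    field_simp
  have hpos : 0 ≤ poch m n / (Nat.factorial n : ℝ) * t ^ n := by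
    have := (poch_pos hm n).le
    positivity
  rw [hterm, Real.norm_eq_abs, Real.norm_eq_abs, abs_mul, abs_of_nonneg hpos]
  have h2 : |(m + n) * t / (n + 1)| ≤ r := by
    rw [abs_of_nonneg (by positivity), div_le_iff₀ (by positivity)]
    linarith [hkey]
  calc poch m n / (Nat.factorial n : ℝ) * t ^ n * |(m + n) * t / ((n:ℝ) + 1)|
      ≤ poch m n / (Nat.factorial n : ℝ) * t ^ n * r := by
        exact mul_le_mul_of_nonneg_left h2 hpos
    _ = r * (poch m n / (Nat.factorial n : ℝ) * t ^ n) := by ring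

/-- Key swap lemma: integral of a nonnegative power series against `s^(c-1) exp(-a s)`. -/
lemma integral_tsum_rpow {c a : ℝ} (hc : 0 < c) (ha : 0 < a) (u : ℕ → ℝ)
    (hu : ∀ i, 0 ≤ u i)
    (hsum : Summable (fun i => u i * ((1 / a) ^ (c + (i : ℝ)) * Real.Gamma (c + i)))) :
    ∫ s in Ioi (0 : ℝ), (∑' i : ℕ, u i * s ^ i) * s ^ (c - 1) * Real.exp (-(a * s))
      = ∑' i : ℕ, u i * ((1 / a) ^ (c + (i : ℝ)) * Real.Gamma (c + i)) := by
  set F : ℕ → ℝ → ℝ := fun i s => u i * (s ^ (c + (i : ℝ) - 1) * Real.exp (-(a * s))) with hF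
  have hint : ∀ i : ℕ, IntegrableOn (F i) (Ioi 0) := by
    intro i
    have h := (integrableOn_rpow_mul_exp_neg_mul_rpow
      (show (-1:ℝ) < c + (i:ℝ) - 1 by push_cast; linarith) one_pos ha)
    have h' : IntegrableOn (fun s : ℝ => s ^ (c + (i:ℝ) - 1) * Real.exp (-(a * s))) (Ioi 0) := by
      refine h.congr_fun (fun s hs => ?_) measurableSet_Ioi
      dsimp only
      rw [Real.rpow_one, neg_mul]
    exact h'.const_mul _
  have hval : ∀ i : ℕ, ∫ s in Ioi (0:ℝ), F i s
      = u i * ((1 / a) ^ (c + (i : ℝ)) * Real.Gamma (c + i)) := by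
    intro i
    rw [hF]
    simp only []
    rw [MeasureTheory.integral_const_mul]
    congr 1
    have := Real.integral_rpow_mul_exp_neg_mul_Ioi
      (show (0:ℝ) < c + (i:ℝ) by positivity) ha
    rw [show c + (i:ℝ) - 1 = (c + (i:ℝ)) - 1 by ring]
    rw [this]
  have hswap : ∫ s in Ioi (0:ℝ), (∑' i, F i s)
      = ∑' i, ∫ s in Ioi (0:ℝ), F i s := by
    apply MeasureTheory.integral_tsum
    · intro i
      exact (hint i).1
    · have hnn : ∀ i : ℕ, ∀ s ∈ Ioi (0:ℝ), 0 ≤ F i s := by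
        intro i s hs
        have : (0:ℝ) < s := hs
        have := hu i
        rw [hF]
        positivity
      have heq : ∀ i : ℕ, ∫⁻ s in Ioi (0:ℝ), ‖F i s‖ₑ
          = ENNReal.ofReal (u i * ((1 / a) ^ (c + (i : ℝ)) * Real.Gamma (c + i))) := by
        intro i
        rw [← hval i]
        have h0 : ∫⁻ s in Ioi (0:ℝ), ‖F i s‖ₑ
            = ∫⁻ s in Ioi (0:ℝ), ENNReal.ofReal (F i s) := by
          refine lintegral_congr_ae ?_
          filter_upwards [ae_restrict_mem measurableSet_Ioi] with s hs
          rw [Real.enorm_eq_ofReal (hnn i s hs)]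
        rw [h0, ← MeasureTheory.ofReal_integral_eq_lintegral_ofReal (hint i)
          ((ae_restrict_iff' measurableSet_Ioi).2 (Filter.Eventually.of_forall (hnn i)))]
      rw [funext heq] at *
      rw [← ENNReal.ofReal_tsum_of_nonneg (fun i => by
        have h1 := hu i
        have h2 := Real.Gamma_pos_of_pos (show (0:ℝ) < c + i by positivity)
        positivity) hsum]
      exact ENNReal.ofReal_ne_top
  rw [← funext hval, ← hswap]
  apply setIntegral_congr_fun measurableSet_Ioi
  intro s hs
  have hs' : (0:ℝ) < s := hs
  show (∑' i : ℕ, u i * s ^ i) * s ^ (c - 1) * Real.exp (-(a * s)) = ∑' i : ℕ, F i s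
  rw [mul_assoc, ← tsum_mul_right]
  apply tsum_congr
  intro i
  rw [hF]
  simp only []
  rw [show c + (i:ℝ) - 1 = (c - 1) + (i:ℝ) by ring, Real.rpow_add hs',
    Real.rpow_natCast]
  ring

/-- The binomial series: `∑ (m)_i/i! tⁱ = (1−t)^{−m}` for `0 ≤ t < 1`. -/
lemma tsum_poch_eq {m t : ℝ} (hm : 0 < m) (ht0 : 0 ≤ t) (ht1 : t < 1) :
    ∑' i : ℕ, poch m i / (Nat.factorial i : ℝ) * t ^ i = (1 - t) ^ (-m) := by
  have hΓ : 0 < Real.Gamma m := Real.Gamma_pos_of_pos hm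
  have h1t : 0 < 1 - t := by linarith
  have hu : ∀ i : ℕ, (0:ℝ) ≤ t ^ i / (Nat.factorial i : ℝ) := by
    intro i; positivity
  have hsum : Summable (fun i : ℕ =>
      t ^ i / (Nat.factorial i : ℝ) * ((1 / 1) ^ (1 * (m + (i:ℝ))) * Real.Gamma (m + i))) := by
    have : (fun i : ℕ =>
        t ^ i / (Nat.factorial i : ℝ) * ((1 / 1) ^ (1 * (m + (i:ℝ))) * Real.Gamma (m + i)))
        = fun i : ℕ => (poch m i / (Nat.factorial i : ℝ) * t ^ i) * Real.Gamma m := by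
      funext i
      rw [Gamma_add_nat hm i]
      simp [Real.one_rpow]
      ring
    rw [this]
    exact (summable_poch hm ht0 ht1).mul_right _
  have hsum' : Summable (fun i : ℕ =>
      t ^ i / (Nat.factorial i : ℝ) * ((1 / 1) ^ (m + (i:ℝ)) * Real.Gamma (m + i))) := by
    simpa using hsum
  have hG := integral_tsum_rpow hm one_pos (fun i => t ^ i / (Nat.factorial i : ℝ)) hu hsum'
  -- identify LHS of hG with a Gamma integral
  have hL : ∫ s in Ioi (0:ℝ),
      (∑' i : ℕ, t ^ i / (Nat.factorial i : ℝ) * s ^ i) * s ^ (m - 1) * Real.exp (-(1 * s))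
      = (1 / (1 - t)) ^ m * Real.Gamma m := by
    rw [← Real.integral_rpow_mul_exp_neg_mul_Ioi hm h1t]
    apply setIntegral_congr_fun measurableSet_Ioi
    intro s hs
    have hexp : (∑' i : ℕ, t ^ i / (Nat.factorial i : ℝ) * s ^ i) = Real.exp (t * s) := by
      rw [Real.exp_eq_exp_ℝ, NormedSpace.exp_eq_tsum_div]
      apply tsum_congr
      intro i
      rw [mul_pow]
      ring
    show (∑' i : ℕ, t ^ i / (Nat.factorial i : ℝ) * s ^ i) * s ^ (m - 1) * Real.exp (-(1 * s))
      = s ^ (m - 1) * Real.exp (-((1 - t) * s))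
    rw [hexp, show -((1 - t) * s) = t * s + -(1 * s) by ring, Real.exp_add]
    ring
  rw [hL] at hG
  -- simplify RHS of hG
  have hR : (∑' i : ℕ, t ^ i / (Nat.factorial i : ℝ) * ((1 / 1) ^ (m + (i:ℝ)) * Real.Gamma (m + i)))
      = (∑' i : ℕ, poch m i / (Nat.factorial i : ℝ) * t ^ i) * Real.Gamma m := by
    rw [← tsum_mul_right]
    apply tsum_congr
    intro i
    rw [Gamma_add_nat hm i]
    simp [Real.one_rpow]
    ring
  rw [hR] at hG
  have : (∑' i : ℕ, poch m i / (Nat.factorial i : ℝ) * t ^ i) = (1 / (1 - t)) ^ m :=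
    (mul_right_cancel₀ hΓ.ne' hG).symm
  rw [this, one_div, Real.inv_rpow h1t.le, ← Real.rpow_neg h1t.le]

/-- `n`-th harmonic number `H_n = ∑_{j=1}^n 1/j` (with `H_0 = 0`). -/
noncomputable def harmonicR (n : ℕ) : ℝ := ∑ j ∈ Finset.range n, 1 / ((j : ℝ) + 1)

/-- Kummer confluent hypergeometric function `₁F₁(m, 1, z) = ∑_{i=0}^∞ ((m)_i/(i!)²) z^i`. -/
noncomputable def kummerM (m z : ℝ) : ℝ :=
  ∑' i : ℕ, poch m i / ((Nat.factorial i : ℝ) ^ 2) * z ^ i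

/-- Kummer confluent hypergeometric function of the second kind
`U(a, b, z) = (1/Γ(a)) ∫₀^∞ e^{−zt} t^{a−1} (1+t)^{b−a−1} dt`. -/
noncomputable def kummerU (a b z : ℝ) : ℝ :=
  (1 / Real.Gamma a) *
    ∫ t in Ioi (0 : ℝ), Real.exp (-z * t) * t ^ (a - 1) * (1 + t) ^ (b - a - 1)

/-- Conditional SNR density of the fdRLoS channel,
`f(γ|x)` with `k_x = k/x`, `γ̄_x = ((k+x)/(k+1))·γ̄`. -/
noncomputable def condPdf (m k γb x γ : ℝ) : ℝ :=
  (m ^ m * (1 + k / x)) / ((m + k / x) ^ m * ((k + x) / (k + 1) * γb)) *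
    Real.exp (-((1 + k / x) / ((k + x) / (k + 1) * γb)) * γ) *
    kummerM m ((k / x) * (1 + k / x) / (k / x + m) * (γ / ((k + x) / (k + 1) * γb)))

/-- Unconditional SNR density of the fdRLoS channel, `f(γ) = ∫₀^∞ f(γ|x) e^{−x} dx`. -/
noncomputable def pdfSNR (m k γb γ : ℝ) : ℝ :=
  ∫ x in Ioi (0 : ℝ), condPdf m k γb x γ * Real.exp (-x)

/-- The conditional fdRLoS SNR density integrates to one. -/
theorem condPdf_integral_one (m k γb : ℝ) (hm : 0 < m) (hk : 0 < k) (hγb : 0 < γb)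
    (x : ℝ) (hx : 0 < x) :
    ∫ γ in Ioi (0 : ℝ), condPdf m k γb x γ = 1 := by
  have hK : 0 < k / x := div_pos hk hx
  have hG0 : 0 < (k + x) / (k + 1) * γb := by
    have h1 : 0 < (k + x) / (k + 1) := by positivity
    positivity
  set K := k / x with hKdef
  set G := (k + x) / (k + 1) * γb with hGdef
  have h1K : 0 < 1 + K := by linarith
  have hKm : 0 < K + m := by linarith
  set A := (1 + K) / G with hAdef
  have hApos : 0 < A := by positivity
  set c0 := K * (1 + K) / ((K + m) * G) with hc0def
  have hc0pos : 0 < c0 := by positivity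
  set t := K / (K + m) with htdef
  have ht0 : 0 < t := by positivity
  have ht1 : t < 1 := by
    rw [htdef, div_lt_one hKm]; linarith
  set u : ℕ → ℝ := fun i => poch m i / ((Nat.factorial i : ℝ)) ^ 2 * c0 ^ i with hudef
  have hunn : ∀ i, 0 ≤ u i := by
    intro i
    have := (poch_pos hm i).le
    have hf : (0:ℝ) < (Nat.factorial i : ℝ) := by exact_mod_cast i.factorial_pos
    positivity
  have htA : c0 / A = t := by
    rw [hc0def, hAdef, htdef]
    field_simp
  have heq : (fun i : ℕ => u i * ((1 / A) ^ ((1:ℝ) + (i : ℝ)) * Real.Gamma (1 + (i:ℕ))))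
      = fun i : ℕ => (1 / A) * (poch m i / (Nat.factorial i : ℝ) * t ^ i) := by
    funext i
    have hf : (0:ℝ) < (Nat.factorial i : ℝ) := by exact_mod_cast i.factorial_pos
    rw [hudef]
    simp only []
    rw [Real.rpow_add (by positivity : (0:ℝ) < 1 / A), Real.rpow_one, Real.rpow_natCast,
      show (1:ℝ) + ((i:ℕ):ℝ) = ((i:ℕ):ℝ) + 1 by push_cast; ring,
      Real.Gamma_nat_eq_factorial]
    have hti : t ^ i = c0 ^ i * (1 / A) ^ i := by
      rw [← mul_pow, ← htA]; congr 1; field_simp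
    rw [hti]
    field_simp
  have hsum : Summable (fun i : ℕ =>
      u i * ((1 / A) ^ ((1:ℝ) + (i : ℝ)) * Real.Gamma (1 + (i:ℕ)))) := by
    rw [heq]
    exact (summable_poch hm ht0.le ht1).mul_left _
  have hswap := integral_tsum_rpow one_pos hApos u hunn hsum
  have hcong : EqOn (fun γ => condPdf m k γb x γ)
      (fun γ => (m ^ m * (1 + K)) / ((m + K) ^ m * G) *
        ((∑' i : ℕ, u i * γ ^ i) * γ ^ ((1:ℝ) - 1) * Real.exp (-(A * γ)))) (Ioi 0) := by
    intro γ hγ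
    simp only [condPdf, ← hKdef, ← hGdef]
    have harg : K * (1 + K) / (K + m) * (γ / G) = c0 * γ := by
      rw [hc0def]; field_simp
    rw [harg]
    have hkum : kummerM m (c0 * γ) = ∑' i : ℕ, u i * γ ^ i := by
      unfold kummerM
      apply tsum_congr
      intro i
      rw [hudef]
      simp only []
      rw [mul_pow]
      ring
    rw [hkum, show ((1:ℝ) - 1) = 0 by ring, Real.rpow_zero,
      show -((1 + K) / G) * γ = -(A * γ) by rw [hAdef]; ring]
    ring
  rw [setIntegral_congr_fun measurableSet_Ioi hcong, MeasureTheory.integral_const_mul, hswap]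
  have htsum : (∑' i : ℕ, u i * ((1 / A) ^ ((1:ℝ) + (i : ℝ)) * Real.Gamma (1 + (i:ℕ))))
      = (1 / A) * (1 - t) ^ (-m) := by
    rw [heq, tsum_mul_left, tsum_poch_eq hm ht0.le ht1]
  rw [htsum]
  have h1t : 1 - t = m / (K + m) := by
    rw [htdef]; field_simp; ring
  rw [h1t, Real.rpow_neg (by positivity), Real.div_rpow hm.le hKm.le, inv_div, hAdef]
  have hmm : (0:ℝ) < m ^ m := Real.rpow_pos_of_pos hm m
  have hmK : (0:ℝ) < (m + K) ^ m := Real.rpow_pos_of_pos (by linarith) m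
  rw [show K + m = m + K by ring]
  field_simp
end

section
/- For all real parameters m > 0, k > 0, γ̄ > 0, the function γ ↦ log₂(1+γ) · f(γ) is integrable on (0, ∞); that is, the ORA ergodic capacity of the fdRLoS channel, ∫₀^∞ log₂(1+γ) f(γ) dγ, is finite. -/
open MeasureTheory Set

lemma poch_nonneg {m : ℝ} (hm : 0 < m) (i : ℕ) : 0 ≤ poch m i :=
  Finset.prod_nonneg fun j _ => by positivity

lemma poch_le_aux (m : ℝ) (hm : 0 < m) (n : ℕ) (hmn : m ≤ (n:ℝ)+1) :
    ∀ i : ℕ, poch m i ≤ ((n:ℝ)+1)^(2*min i n) * ((Nat.factorial i : ℝ))^2 / ((Nat.factorial (i - n) : ℝ)) := by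
  intro i
  induction i with
  | zero => simp [poch]
  | succ i ih =>
    have hstep : poch m (i+1) = poch m i * (m + i) := Finset.prod_range_succ _ _
    have hfac : (0:ℝ) < (Nat.factorial (i - n) : ℝ) := by positivity
    have hmi : (0:ℝ) < m + i := by positivity
    by_cases hin : i < n
    · have h1 : i + 1 - n = 0 := by omega
      have h0 : i - n = 0 := by omega
      have hmin1 : min (i+1) n = i + 1 := by omega
      have hmin0 : min i n = i := by omega
      rw [hstep, hmin1, h1]
      rw [hmin0, h0] at ih
      have hb : m + (i:ℝ) ≤ ((n:ℝ)+1)^2 * ((i:ℝ)+1)^2 := by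
        have h2 : (i:ℝ) ≤ (n:ℝ) := by exact_mod_cast hin.le
        have : ((1:ℝ)) ≤ ((i:ℝ)+1)^2 := by nlinarith [Nat.cast_nonneg (α := ℝ) i]
        nlinarith [Nat.cast_nonneg (α := ℝ) i, Nat.cast_nonneg (α := ℝ) n]
      have hfs : (Nat.factorial (i+1) : ℝ) = ((i:ℝ)+1) * (Nat.factorial i : ℝ) := by
        rw [Nat.factorial_succ]; push_cast; ring
      rw [hfs]
      have hpn : (0:ℝ) ≤ ((n:ℝ)+1)^(2*i) := by positivity
      have hfn : (0:ℝ) ≤ ((Nat.factorial i : ℝ))^2 := by positivity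
      calc poch m i * (m + i) ≤ (((n:ℝ)+1)^(2*i) * ((Nat.factorial i : ℝ))^2 / (Nat.factorial 0 : ℝ)) * (((n:ℝ)+1)^2 * ((i:ℝ)+1)^2) := by
            apply mul_le_mul ih hb hmi.le (by positivity)
        _ = ((n:ℝ)+1)^(2*(i+1)) * (((i:ℝ)+1) * (Nat.factorial i : ℝ))^2 / (Nat.factorial 0 : ℝ) := by
            simp [pow_succ, pow_mul]; ring
    · have hn : n ≤ i := by omega
      have h1 : i + 1 - n = (i - n) + 1 := by omega
      have hmin1 : min (i+1) n = n := by omega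
      have hmin0 : min i n = n := by omega
      rw [hstep, hmin1, h1]
      rw [hmin0] at ih
      have hcast : ((i - n : ℕ) : ℝ) = (i:ℝ) - n := by
        push_cast [Nat.cast_sub hn]; ring
      have hkey : (m + i) * (((i:ℝ) - n) + 1) ≤ ((i:ℝ)+1)^2 := by
        have h2 : (n:ℝ) ≤ (i:ℝ) := by exact_mod_cast hn
        nlinarith [Nat.cast_nonneg (α := ℝ) n]
      have hfs : ((Nat.factorial (i+1) : ℕ) : ℝ) = ((i:ℝ)+1) * (Nat.factorial i : ℝ) := by
        rw [Nat.factorial_succ]; push_cast; ring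
      have hfs2 : ((Nat.factorial ((i-n)+1) : ℕ) : ℝ) = (((i:ℝ) - n)+1) * (Nat.factorial (i-n) : ℝ) := by
        rw [Nat.factorial_succ]; push_cast [hcast]; ring
      rw [hfs, hfs2]
      have hd : (0:ℝ) < ((i:ℝ) - n) + 1 := by
        have h2 : (n:ℝ) ≤ (i:ℝ) := by exact_mod_cast hn
        linarith
      rw [le_div_iff₀ (by positivity)]
      have ih' := (le_div_iff₀ hfac).mp ih
      calc poch m (i) * (m+i) * ((((i:ℝ) - n)+1) * (Nat.factorial (i-n) : ℝ))
          = (poch m i * (Nat.factorial (i-n) : ℝ)) * ((m+i) * (((i:ℝ) - n)+1)) := by ring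
        _ ≤ (((n:ℝ)+1)^(2*n) * ((Nat.factorial i : ℝ))^2) * (((i:ℝ)+1)^2) := by
            apply mul_le_mul ih' hkey (by positivity) (by positivity)
        _ = ((n:ℝ)+1)^(2*n) * (((i:ℝ)+1) * (Nat.factorial i : ℝ))^2 := by ring

lemma poch_le (m : ℝ) (hm : 0 < m) (n : ℕ) (hmn : m ≤ (n:ℝ)+1) (i : ℕ) :
    poch m i ≤ ((n:ℝ)+1)^(2*n) * ((Nat.factorial i : ℝ))^2 / ((Nat.factorial (i - n) : ℝ)) := by
  refine (poch_le_aux m hm n hmn i).trans ?_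
  have h1 : ((n:ℝ)+1)^(2*min i n) ≤ ((n:ℝ)+1)^(2*n) := by
    apply pow_le_pow_right₀ (by linarith [Nat.cast_nonneg (α := ℝ) n]) (by omega)
  have : (0:ℝ) < (Nat.factorial (i - n) : ℝ) := by positivity
  gcongr

lemma summable_shift (w : ℝ) (hw : 0 ≤ w) (n : ℕ) :
    Summable (fun i : ℕ => w ^ i / (Nat.factorial (i - n) : ℝ)) := by
  rw [← summable_nat_add_iff n]
  have : (fun i : ℕ => w ^ (i + n) / (Nat.factorial (i + n - n) : ℝ))
      = fun i : ℕ => w ^ n * (w ^ i / (Nat.factorial i : ℝ)) := by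
    funext i
    simp [Nat.add_sub_cancel, pow_add]
    ring
  rw [this]
  exact (Real.summable_pow_div_factorial w).mul_left _

lemma term_le (m : ℝ) (hm : 0 < m) (n : ℕ) (hmn : m ≤ (n:ℝ)+1) {z : ℝ} (hz : 0 ≤ z) (i : ℕ) :
    poch m i / ((Nat.factorial i : ℝ) ^ 2) * z ^ i
      ≤ ((n:ℝ)+1)^(2*n) * (z ^ i / (Nat.factorial (i - n) : ℝ)) := by
  have h1 := poch_le m hm n hmn i
  have hfi : (0:ℝ) < (Nat.factorial i : ℝ)^2 := by positivity
  have hfn : (0:ℝ) < (Nat.factorial (i - n) : ℝ) := by positivity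
  have h2 : poch m i / ((Nat.factorial i : ℝ)^2) ≤ ((n:ℝ)+1)^(2*n) / (Nat.factorial (i-n) : ℝ) := by
    rw [div_le_div_iff₀ hfi hfn]
    calc poch m i * (Nat.factorial (i-n) : ℝ)
        ≤ (((n:ℝ)+1)^(2*n) * (Nat.factorial i : ℝ)^2 / (Nat.factorial (i-n) : ℝ)) * (Nat.factorial (i-n) : ℝ) := by
          exact mul_le_mul_of_nonneg_right h1 hfn.le
      _ = ((n:ℝ)+1)^(2*n) * (Nat.factorial i : ℝ)^2 := by field_simp
  calc poch m i / ((Nat.factorial i : ℝ)^2) * z^i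
      ≤ (((n:ℝ)+1)^(2*n) / (Nat.factorial (i-n) : ℝ)) * z^i := by
        exact mul_le_mul_of_nonneg_right h2 (by positivity)
    _ = ((n:ℝ)+1)^(2*n) * (z^i / (Nat.factorial (i-n) : ℝ)) := by ring

lemma summable_kummer (m : ℝ) (hm : 0 < m) (z : ℝ) :
    Summable (fun i : ℕ => poch m i / ((Nat.factorial i : ℝ) ^ 2) * z ^ i) := by
  obtain ⟨n, hn⟩ : ∃ n : ℕ, m ≤ (n:ℝ)+1 := ⟨⌈m⌉₊, by linarith [Nat.le_ceil m]⟩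
  apply Summable.of_norm
  apply Summable.of_nonneg_of_le (fun i => norm_nonneg _)
    (fun i => ?_) (((summable_shift |z| (abs_nonneg z) n).mul_left (((n:ℝ)+1)^(2*n))))
  have : ‖poch m i / ((Nat.factorial i : ℝ)^2) * z^i‖
      = poch m i / ((Nat.factorial i : ℝ)^2) * |z|^i := by
    rw [norm_mul, norm_div, Real.norm_eq_abs, Real.norm_eq_abs, Real.norm_eq_abs,
      abs_of_nonneg (poch_nonneg hm i), abs_of_nonneg (by positivity : (0:ℝ) ≤ (Nat.factorial i : ℝ)^2),
      abs_pow]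
  rw [this]
  exact term_le m hm n hn (abs_nonneg z) i

lemma tsum_exp (z : ℝ) : ∑' i : ℕ, z ^ i / (Nat.factorial i : ℝ) = Real.exp z := by
  rw [Real.exp_eq_exp_ℝ, NormedSpace.exp_eq_tsum_div]

lemma kummerM_nonneg {m : ℝ} (hm : 0 < m) {z : ℝ} (hz : 0 ≤ z) : 0 ≤ kummerM m z :=
  tsum_nonneg fun i => by
    have := poch_nonneg hm i
    positivity

lemma kummerM_le (m : ℝ) (hm : 0 < m) (n : ℕ) (hmn : m ≤ (n:ℝ)+1) {z : ℝ} (hz : 0 ≤ z) :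
    kummerM m z ≤ ((n:ℝ)+1)^(2*n) * (((n:ℝ)+1) * ((1+z)^n * Real.exp z)) := by
  have hsum := summable_kummer m hm z
  have hsum2 := (summable_shift z hz n).mul_left (((n:ℝ)+1)^(2*n))
  have h1 : kummerM m z ≤ ∑' i : ℕ, ((n:ℝ)+1)^(2*n) * (z ^ i / (Nat.factorial (i - n) : ℝ)) :=
    Summable.tsum_le_tsum (fun i => term_le m hm n hmn hz i) hsum hsum2
  refine h1.trans ?_
  rw [tsum_mul_left]
  have hbound : ∑' i : ℕ, z ^ i / (Nat.factorial (i - n) : ℝ) ≤ ((n:ℝ)+1) * ((1+z)^n * Real.exp z) := by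
    rw [← Summable.sum_add_tsum_nat_add n (summable_shift z hz n)]
    have hA : ∑ i ∈ Finset.range n, z ^ i / (Nat.factorial (i - n) : ℝ) ≤ (n:ℝ) * (1+z)^n := by
      calc ∑ i ∈ Finset.range n, z ^ i / (Nat.factorial (i - n) : ℝ)
          ≤ ∑ i ∈ Finset.range n, (1+z)^n := by
            apply Finset.sum_le_sum
            intro i hi
            have h1 : (1:ℝ) ≤ (Nat.factorial (i-n) : ℝ) := by
              exact_mod_cast Nat.one_le_iff_ne_zero.mpr (Nat.factorial_ne_zero _)
            calc z^i / (Nat.factorial (i-n) : ℝ) ≤ z^i / 1 := by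
                  apply div_le_div_of_nonneg_left (by positivity) one_pos h1
              _ = z^i := div_one _
              _ ≤ (1+z)^i := pow_le_pow_left₀ hz (by linarith) i
              _ ≤ (1+z)^n := pow_le_pow_right₀ (by linarith) (Finset.mem_range.mp hi).le
        _ = (n:ℝ) * (1+z)^n := by rw [Finset.sum_const, Finset.card_range, nsmul_eq_mul]
    have hB : ∑' i : ℕ, z ^ (i + n) / (Nat.factorial (i + n - n) : ℝ) = z^n * Real.exp z := by
      have : (fun i : ℕ => z ^ (i + n) / (Nat.factorial (i + n - n) : ℝ))
          = fun i : ℕ => z ^ n * (z ^ i / (Nat.factorial i : ℝ)) := by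
        funext i; simp [Nat.add_sub_cancel, pow_add]; ring
      rw [this, tsum_mul_left, tsum_exp]
    rw [hB]
    have hzn : z^n ≤ (1+z)^n := pow_le_pow_left₀ hz (by linarith) n
    have hexp : (0:ℝ) < Real.exp z := Real.exp_pos z
    have h1e : (1:ℝ) ≤ Real.exp z := by
      rw [← Real.exp_zero]; exact Real.exp_le_exp.mpr hz
    have t1 : z^n * Real.exp z ≤ (1+z)^n * Real.exp z :=
      mul_le_mul_of_nonneg_right hzn hexp.le
    have t2 : (n:ℝ) * (1+z)^n ≤ ((n:ℝ) * (1+z)^n) * Real.exp z :=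
      le_mul_of_one_le_right (by positivity) h1e
    nlinarith [t1, t2]
  calc ((n:ℝ)+1)^(2*n) * ∑' i : ℕ, z ^ i / (Nat.factorial (i - n) : ℝ)
      ≤ ((n:ℝ)+1)^(2*n) * (((n:ℝ)+1) * ((1+z)^n * Real.exp z)) := by
        apply mul_le_mul_of_nonneg_left hbound (by positivity)

lemma measurable_kummerM (m : ℝ) (hm : 0 < m) : Measurable (kummerM m) := by
  apply measurable_of_tendsto_metrizable
    (f := fun N (z : ℝ) => ∑ i ∈ Finset.range N, poch m i / ((Nat.factorial i : ℝ) ^ 2) * z ^ i)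
  · intro N
    apply Finset.measurable_sum
    intro i _
    exact ((measurable_id.pow_const i).const_mul _)
  · rw [tendsto_pi_nhds]
    intro z
    exact (summable_kummer m hm z).hasSum.tendsto_sum_nat

lemma one_add_le_exp {E s : ℝ} (hE : 1 ≤ E) (hs : 0 ≤ s) : 1 + s ≤ E * Real.exp (s / E) := by
  have hE0 : 0 < E := lt_of_lt_of_le one_pos hE
  have h := Real.add_one_le_exp (s / E)
  calc 1 + s ≤ E + s := by linarith
    _ = E * (s/E + 1) := by field_simp; ring
    _ ≤ E * Real.exp (s/E) := mul_le_mul_of_nonneg_left h hE0.le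

lemma logb_le {γ : ℝ} (hγ : 0 ≤ γ) : Real.logb 2 (1+γ) ≤ 2*γ := by
  rw [Real.logb]
  have hlog : Real.log (1+γ) ≤ γ := by
    have := Real.log_le_sub_one_of_pos (by linarith : (0:ℝ) < 1+γ); linarith
  have h2 : (1/2 : ℝ) ≤ Real.log 2 := by
    have := Real.log_two_gt_d9; linarith
  have hpos : (0:ℝ) < Real.log 2 := by linarith
  rw [div_le_iff₀ hpos]
  have hl0 : 0 ≤ Real.log (1+γ) := Real.log_nonneg (by linarith)
  nlinarith


set_option maxHeartbeats 1000000 in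
lemma key_pointwise (m : ℝ) (hm : 0 < m) (n : ℕ) (hmn : m ≤ (n:ℝ)+1)
    (u G γ : ℝ) (hu : 0 < u) (hG : 0 < G) (hγ : 0 < γ) :
    Real.logb 2 (1+γ) *
      ((m^m*(1+u))/((m+u)^m*G) * Real.exp (-((1+u)/G)*γ) *
        kummerM m (u*(1+u)/(u+m)*(γ/G)))
    ≤ (8 * (((n:ℝ)+1)^(2*n)*((n:ℝ)+1)) * (4*(n:ℝ)+4)^n
        * ((m^m*(1+u))/((m+u)^m*G)) * (((u+m)/m)^n * (((u+m)*G)/(m*(1+u)))))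
      * Real.exp (-(m*(1+u)/((u+m)*G)/2)*γ) := by
  have hum : (0:ℝ) < u + m := by linarith
  have hmu : (0:ℝ) < m + u := by linarith
  have h1u : (0:ℝ) < 1 + u := by linarith
  set A := (1+u)/G with hA
  set b := m*(1+u)/((u+m)*G) with hbdef
  set c := u*(1+u)/((u+m)*G) with hcdef
  set R := (u+m)/m with hRdef
  set P := (m^m*(1+u))/((m+u)^m*G) with hPdef
  set C1 := (((n:ℝ)+1)^(2*n)*((n:ℝ)+1)) with hC1def
  set C2 := (4*(n:ℝ)+4)^n with hC2def
  have hb : 0 < b := by positivity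
  have hc : 0 < c := by positivity
  have hA0 : 0 < A := by positivity
  have hP0 : 0 ≤ P := by positivity
  have hC10 : 0 ≤ C1 := by positivity
  have hC20 : 0 ≤ C2 := by positivity
  have hR1 : 1 ≤ R := by
    rw [hRdef, le_div_iff₀ hm]; linarith
  have harg : u*(1+u)/(u+m)*(γ/G) = c*γ := by
    rw [hcdef]; field_simp
  have hAcb : A - c = b := by
    rw [hA, hcdef, hbdef]; field_simp; ring
  have hARb : A = R * b := by
    rw [hA, hRdef, hbdef]; field_simp
  have hcA : c ≤ A := by
    rw [hcdef, hA, div_le_div_iff₀ (by positivity) hG]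
    nlinarith [mul_nonneg (mul_nonneg h1u.le hG.le) hm.le]
  have hbinv : 1/b = ((u+m)*G)/(m*(1+u)) := by
    rw [hbdef, one_div_div]
  clear_value A b c R P C1 C2
  have hcγ : 0 ≤ c*γ := mul_nonneg hc.le hγ.le
  have hbγ : 0 ≤ b*γ := mul_nonneg hb.le hγ.le
  have hRn : (0:ℝ) ≤ R^n := pow_nonneg (by linarith) n
  have hAγ : 0 ≤ A*γ := mul_nonneg hA0.le hγ.le
  have hK : kummerM m (c*γ) ≤ C1 * ((1+c*γ)^n * Real.exp (c*γ)) := by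
    calc kummerM m (c*γ)
        ≤ ((n:ℝ)+1)^(2*n) * (((n:ℝ)+1) * ((1+c*γ)^n * Real.exp (c*γ))) :=
          kummerM_le m hm n hmn hcγ
      _ = C1 * ((1+c*γ)^n * Real.exp (c*γ)) := by rw [hC1def]; ring
  have hK0 : 0 ≤ kummerM m (c*γ) := kummerM_nonneg hm hcγ
  have hKb0 : (0:ℝ) ≤ C1 * ((1+c*γ)^n * Real.exp (c*γ)) :=
    mul_nonneg hC10 (mul_nonneg (pow_nonneg (by linarith) n) (Real.exp_pos _).le)
  have hlogb : Real.logb 2 (1+γ) ≤ 2*γ := logb_le hγ.le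
  have hlogb0 : 0 ≤ Real.logb 2 (1+γ) := Real.logb_nonneg one_lt_two (by linarith)
  have hexp0 : (0:ℝ) < Real.exp (-A*γ) := Real.exp_pos _
  have hpow1 : (1+c*γ)^n ≤ (1+A*γ)^n := by
    apply pow_le_pow_left₀ (by linarith)
    have : c*γ ≤ A*γ := mul_le_mul_of_nonneg_right hcA hγ.le
    linarith
  have hpow2 : (1+A*γ)^n ≤ R^n * ((1+b*γ)^n) := by
    rw [← mul_pow]
    apply pow_le_pow_left₀ (by linarith)
    have h1 : 1 + A*γ = 1 + R*(b*γ) := by rw [hARb]; ring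
    rw [h1]
    nlinarith
  have hpow3 : (1+b*γ)^n ≤ C2 * Real.exp (b*γ/4) := by
    have hn0 : (0:ℝ) ≤ (n:ℝ) := Nat.cast_nonneg n
    have hE : (1:ℝ) ≤ 4*(n:ℝ)+4 := by linarith
    have h4 : (0:ℝ) < 4*(n:ℝ)+4 := by linarith
    have h1 : 1 + b*γ ≤ (4*(n:ℝ)+4) * Real.exp (b*γ/(4*(n:ℝ)+4)) :=
      one_add_le_exp hE hbγ
    calc (1+b*γ)^n ≤ ((4*(n:ℝ)+4) * Real.exp (b*γ/(4*(n:ℝ)+4)))^n := by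
          apply pow_le_pow_left₀ (by linarith) h1
      _ = C2 * Real.exp (b*γ/(4*(n:ℝ)+4))^n := by rw [hC2def, mul_pow]
      _ = C2 * Real.exp ((n:ℝ) * (b*γ/(4*(n:ℝ)+4))) := by
          rw [← Real.exp_nat_mul]
      _ ≤ C2 * Real.exp (b*γ/4) := by
          apply mul_le_mul_of_nonneg_left _ hC20
          apply Real.exp_le_exp.mpr
          rw [mul_div_assoc', div_le_div_iff₀ h4 (by norm_num)]
          nlinarith
  have hγle : γ ≤ (4/b) * Real.exp (b*γ/4) := by
    have h1 : 1 + b*γ ≤ 4 * Real.exp (b*γ/4) := one_add_le_exp (by norm_num) hbγ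
    rw [div_mul_eq_mul_div, le_div_iff₀ hb]
    nlinarith [Real.exp_pos (b*γ/4)]
  calc Real.logb 2 (1+γ) * (P * Real.exp (-A*γ) * kummerM m (u*(1+u)/(u+m)*(γ/G)))
      = Real.logb 2 (1+γ) * (P * Real.exp (-A*γ) * kummerM m (c*γ)) := by rw [harg]
    _ ≤ (2*γ) * (P * Real.exp (-A*γ) * (C1 * ((1+c*γ)^n * Real.exp (c*γ)))) := by
        apply mul_le_mul hlogb
          (mul_le_mul_of_nonneg_left hK (mul_nonneg hP0 hexp0.le))
          (mul_nonneg (mul_nonneg hP0 hexp0.le) hK0)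
          (by linarith)
    _ = (2*γ) * P * C1 * (1+c*γ)^n * (Real.exp (-A*γ) * Real.exp (c*γ)) := by ring
    _ = (2*γ) * P * C1 * (1+c*γ)^n * Real.exp (-(b*γ)) := by
        have hee : (-A*γ + c*γ) = -(b*γ) := by linear_combination (-γ) * hAcb
        rw [← Real.exp_add, hee]
    _ ≤ (2*γ) * P * C1 * (R^n * (C2 * Real.exp (b*γ/4))) * Real.exp (-(b*γ)) := by
        apply mul_le_mul_of_nonneg_right _ (Real.exp_pos _).le
        apply mul_le_mul_of_nonneg_left _
          (mul_nonneg (mul_nonneg (by linarith : (0:ℝ) ≤ 2*γ) hP0) hC10)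
        calc (1+c*γ)^n ≤ (1+A*γ)^n := hpow1
          _ ≤ R^n * (1+b*γ)^n := hpow2
          _ ≤ R^n * (C2 * Real.exp (b*γ/4)) :=
              mul_le_mul_of_nonneg_left hpow3 hRn
    _ ≤ (2*((4/b) * Real.exp (b*γ/4))) * P * C1 * (R^n * (C2 * Real.exp (b*γ/4))) * Real.exp (-(b*γ)) := by
        have h0 : (0:ℝ) ≤ P * C1 * (R^n * (C2 * Real.exp (b*γ/4))) * Real.exp (-(b*γ)) :=
          mul_nonneg (mul_nonneg (mul_nonneg hP0 hC10)
            (mul_nonneg hRn (mul_nonneg hC20 (Real.exp_pos _).le))) (Real.exp_pos _).le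
        have h2 : 2*γ ≤ 2*((4/b) * Real.exp (b*γ/4)) := by linarith
        calc (2*γ) * P * C1 * (R^n * (C2 * Real.exp (b*γ/4))) * Real.exp (-(b*γ))
            = (2*γ) * (P * C1 * (R^n * (C2 * Real.exp (b*γ/4))) * Real.exp (-(b*γ))) := by ring
          _ ≤ (2*((4/b) * Real.exp (b*γ/4))) * (P * C1 * (R^n * (C2 * Real.exp (b*γ/4))) * Real.exp (-(b*γ))) :=
              mul_le_mul_of_nonneg_right h2 h0
          _ = (2*((4/b) * Real.exp (b*γ/4))) * P * C1 * (R^n * (C2 * Real.exp (b*γ/4))) * Real.exp (-(b*γ)) := by ring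
    _ = (8 * C1 * C2 * P * (R^n * (1/b))) *
          (Real.exp (b*γ/4) * (Real.exp (b*γ/4) * Real.exp (-(b*γ)))) := by ring
    _ = (8 * C1 * C2 * P * (R^n * (1/b))) * Real.exp (-(b/2)*γ) := by
        rw [← Real.exp_add, ← Real.exp_add]
        congr 1
        ring
    _ = (8 * C1 * C2 * P * (R^n * (((u+m)*G)/(m*(1+u))))) * Real.exp (-(b/2)*γ) := by
        rw [hbinv]

lemma rpow_le_one_add {t θ : ℝ} (ht : 0 ≤ t) (hθ0 : 0 ≤ θ) (hθ1 : θ ≤ 1) :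
    t ^ θ ≤ 1 + t := by
  rcases le_or_gt t 1 with h | h
  · have := Real.rpow_le_one ht h hθ0
    linarith
  · calc t ^ θ ≤ t ^ (1:ℝ) := Real.rpow_le_rpow_of_exponent_le h.le hθ1
      _ = t := Real.rpow_one t
    linarith

set_option maxHeartbeats 1000000 in
lemma coef_bound (m k γb x : ℝ) (hm : 0 < m) (hk : 0 < k) (hγb : 0 < γb) (hx : 0 < x)
    (n : ℕ) (hmn : m ≤ (n:ℝ)+1) (hnm : (n:ℝ) ≤ m) :
    (m^m*(1+k/x))/((m+k/x)^m*((k+x)/(k+1)*γb))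
      * (((k/x+m)/m)^n * (((k/x+m)*((k+x)/(k+1)*γb))/(m*(1+k/x))))
      * (2 * (((k/x+m)*((k+x)/(k+1)*γb))/(m*(1+k/x))))
    ≤ (2*(m^m/m^(n+2))*(max 1 m)^(2:ℝ)*(1+k)*γb) * ((1+x)^2 * x^(-((n:ℝ)+1-m))) := by
  have hu : 0 < k/x := by positivity
  set u := k/x with hudef
  set G := (k+x)/(k+1)*γb with hGdef
  have hG : 0 < G := by positivity
  have hmu : (0:ℝ) < m + u := by linarith
  have h1u : (0:ℝ) < 1 + u := by linarith
  have hrp : (0:ℝ) < (m+u)^m := Real.rpow_pos_of_pos hmu m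
  set θ := (n:ℝ)+1-m with hθdef
  have hθ0 : 0 ≤ θ := by rw [hθdef]; linarith
  have hθ1 : θ ≤ 1 := by rw [hθdef]; linarith
  set M1 := max 1 m with hM1def
  have hM1 : (1:ℝ) ≤ M1 := le_max_left 1 m
  have hmM1 : m ≤ M1 := le_max_right 1 m
  have hM10 : (0:ℝ) < M1 := by linarith
  -- Step 1 : rewrite LHS as a single product
  have h1ueq : 1 + u = (x+k)/x := by rw [hudef]; field_simp
  have step1 :
      (m^m*(1+u))/((m+u)^m*G) * (((u+m)/m)^n * (((u+m)*G)/(m*(1+u))))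
        * (2 * (((u+m)*G)/(m*(1+u))))
      = 2*(m^m/m^(n+2)) * ((m+u)^(n+2) / (m+u)^m) * (G/(1+u)) := by
    have hmne : (m:ℝ) ≠ 0 := ne_of_gt hm
    have h1 : ((u+m):ℝ) = m + u := by ring
    rw [h1, div_pow]
    field_simp
    ring
  rw [step1]
  -- Step 2 : split the power
  have step2 : ((m+u):ℝ)^(n+2) / (m+u)^m = (m+u)^(θ+1) := by
    have h1 : ((m+u):ℝ)^(n+2) = (m+u)^(((n+2:ℕ)):ℝ) := (Real.rpow_natCast _ _).symm
    rw [h1, ← Real.rpow_sub hmu]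
    congr 1
    push_cast
    rw [hθdef]
    ring
  rw [step2]
  -- Step 3 : bound (m+u)^(θ+1)
  have step3 : (m+u)^(θ+1) ≤ M1^(2:ℝ) * (1+u)^(θ+1) := by
    have h1 : m + u ≤ M1*(1+u) := by nlinarith
    calc (m+u)^(θ+1) ≤ (M1*(1+u))^(θ+1) :=
          Real.rpow_le_rpow hmu.le h1 (by linarith)
      _ = M1^(θ+1) * (1+u)^(θ+1) := Real.mul_rpow hM10.le h1u.le
      _ ≤ M1^(2:ℝ) * (1+u)^(θ+1) := by
          apply mul_le_mul_of_nonneg_right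
            (Real.rpow_le_rpow_of_exponent_le hM1 (by linarith))
            (Real.rpow_nonneg h1u.le _)
  -- Step 4 : (1+u)^(θ+1)/(1+u) = (1+u)^θ  and  (1+u)^θ ≤ (1+k)*(1+x)*x^(-θ)
  have step4 : (1+u)^(θ+1) = (1+u)^θ * (1+u) := by
    rw [Real.rpow_add h1u, Real.rpow_one]
  have step5 : (1+u)^θ ≤ (1+k)*(1+x) * x^(-θ) := by
    rw [h1ueq, Real.div_rpow (by linarith) hx.le, Real.rpow_neg hx.le, div_eq_mul_inv]
    apply mul_le_mul_of_nonneg_right _ (by positivity)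
    calc (x+k)^θ ≤ 1 + (x+k) := rpow_le_one_add (by linarith) hθ0 hθ1
      _ ≤ (1+k)*(1+x) := by nlinarith
  have stepG : G ≤ γb * (1+x) := by
    rw [hGdef]
    rw [div_mul_eq_mul_div, div_le_iff₀ (by linarith : (0:ℝ) < k+1)]
    nlinarith [mul_nonneg (mul_nonneg hγb.le hk.le) hx.le]
  -- assemble
  have hmm : (0:ℝ) < m^m := Real.rpow_pos_of_pos hm m
  have hc0 : (0:ℝ) ≤ 2*(m^m/m^(n+2)) := by positivity
  calc 2*(m^m/m^(n+2)) * ((m+u)^(θ+1)) * (G/(1+u))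
      ≤ 2*(m^m/m^(n+2)) * (M1^(2:ℝ) * ((1+u)^θ * (1+u))) * (G/(1+u)) := by
        apply mul_le_mul_of_nonneg_right _ (by positivity)
        apply mul_le_mul_of_nonneg_left _ hc0
        rw [← step4]
        exact step3
    _ = 2*(m^m/m^(n+2)) * M1^(2:ℝ) * (1+u)^θ * G * ((1+u)/(1+u)) := by ring
    _ = 2*(m^m/m^(n+2)) * M1^(2:ℝ) * (1+u)^θ * G := by
        rw [div_self (ne_of_gt h1u), mul_one]
    _ ≤ 2*(m^m/m^(n+2)) * M1^(2:ℝ) * ((1+k)*(1+x)*x^(-θ)) * (γb*(1+x)) := by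
        apply mul_le_mul
        · apply mul_le_mul_of_nonneg_left step5 (by positivity)
        · exact stepG
        · exact hG.le
        · positivity
    _ = (2*(m^m/m^(n+2))*M1^(2:ℝ)*(1+k)*γb) * ((1+x)^2 * x^(-θ)) := by ring

set_option maxHeartbeats 1000000 in
lemma slice_bound (m k γb : ℝ) (hm : 0 < m) (hk : 0 < k) (hγb : 0 < γb)
    (n : ℕ) (hmn : m ≤ (n:ℝ)+1) (hnm : (n:ℝ) ≤ m) {x : ℝ} (hx : 0 < x) :
    ∫⁻ γ in Ioi 0, ENNReal.ofReal (Real.logb 2 (1+γ) * (condPdf m k γb x γ * Real.exp (-x)))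
      ≤ ENNReal.ofReal (((8 * (((n:ℝ)+1)^(2*n)*((n:ℝ)+1)) * (4*(n:ℝ)+4)^n) *
          (2*(m^m/m^(n+2))*(max 1 m)^(2:ℝ)*(1+k)*γb)) *
          (((1+x)^2 * x^(-((n:ℝ)+1-m))) * Real.exp (-x))) := by
  have hu : 0 < k/x := by positivity
  have hG : (0:ℝ) < (k+x)/(k+1)*γb := by positivity
  set b2 := m*(1+k/x)/((k/x+m)*((k+x)/(k+1)*γb))/2 with hb2def
  have hb2 : 0 < b2 := by rw [hb2def]; positivity
  set C1 := (((n:ℝ)+1)^(2*n)*((n:ℝ)+1)) with hC1def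
  set C2 := (4*(n:ℝ)+4)^n with hC2def
  set P := (m^m*(1+k/x))/((m+k/x)^m*((k+x)/(k+1)*γb)) with hPdef
  set Rn := ((k/x+m)/m)^n with hRndef
  set Binv := ((k/x+m)*((k+x)/(k+1)*γb))/(m*(1+k/x)) with hBinvdef
  have hW0 : 0 ≤ 8 * C1 * C2 * P * (Rn * Binv) := by
    rw [hC1def, hC2def, hPdef, hRndef, hBinvdef]; positivity
  have hkey : ∀ γ : ℝ, 0 < γ →
      Real.logb 2 (1+γ) * condPdf m k γb x γ
        ≤ (8 * C1 * C2 * P * (Rn * Binv)) * Real.exp (-b2*γ) := by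
    intro γ hγ
    have h := key_pointwise m hm n hmn (k/x) ((k+x)/(k+1)*γb) γ hu hG hγ
    simpa only [condPdf, hC1def, hC2def, hPdef, hRndef, hBinvdef, hb2def] using h
  -- pointwise bound at the ofReal level
  have step1 : ∫⁻ γ in Ioi 0, ENNReal.ofReal (Real.logb 2 (1+γ) * (condPdf m k γb x γ * Real.exp (-x)))
      ≤ ∫⁻ γ in Ioi 0, ENNReal.ofReal (((8 * C1 * C2 * P * (Rn * Binv)) * Real.exp (-x)) * Real.exp (-b2*γ)) := by
    apply lintegral_mono_ae
    filter_upwards [ae_restrict_mem measurableSet_Ioi] with γ hγ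
    apply ENNReal.ofReal_le_ofReal
    calc Real.logb 2 (1+γ) * (condPdf m k γb x γ * Real.exp (-x))
        = (Real.logb 2 (1+γ) * condPdf m k γb x γ) * Real.exp (-x) := by ring
      _ ≤ ((8 * C1 * C2 * P * (Rn * Binv)) * Real.exp (-b2*γ)) * Real.exp (-x) :=
          mul_le_mul_of_nonneg_right (hkey γ hγ) (Real.exp_pos _).le
      _ = ((8 * C1 * C2 * P * (Rn * Binv)) * Real.exp (-x)) * Real.exp (-b2*γ) := by ring
  refine step1.trans ?_
  -- compute the integral of the exponential bound
  have hInt : Integrable (fun γ => ((8 * C1 * C2 * P * (Rn * Binv)) * Real.exp (-x)) * Real.exp (-b2*γ))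
      (volume.restrict (Ioi 0)) :=
    (exp_neg_integrableOn_Ioi 0 hb2).const_mul _
  have hnn : 0 ≤ᵐ[volume.restrict (Ioi (0:ℝ))]
      (fun γ => ((8 * C1 * C2 * P * (Rn * Binv)) * Real.exp (-x)) * Real.exp (-b2*γ)) := by
    filter_upwards with γ
    exact mul_nonneg (mul_nonneg hW0 (Real.exp_pos _).le) (Real.exp_pos _).le
  rw [← ofReal_integral_eq_lintegral_ofReal hInt hnn]
  apply ENNReal.ofReal_le_ofReal
  have hval : ∫ γ in Ioi (0:ℝ), Real.exp (-b2*γ) = b2⁻¹ := by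
    have h := integral_comp_mul_left_Ioi (fun y => Real.exp (-y)) 0 hb2
    simp only [mul_zero, integral_exp_neg_Ioi, neg_zero, Real.exp_zero, smul_eq_mul, mul_one] at h
    calc ∫ γ in Ioi (0:ℝ), Real.exp (-b2*γ) = ∫ γ in Ioi (0:ℝ), Real.exp (-(b2*γ)) := by
          simp only [neg_mul]
      _ = b2⁻¹ := h
  rw [MeasureTheory.integral_const_mul, hval]
  -- final coefficient comparison
  have hbinv : b2⁻¹ = 2 * Binv := by
    rw [hb2def, hBinvdef]
    have h1 : (k/x+m) ≠ 0 := by positivity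
    have h2 : ((k+x)/(k+1)*γb) ≠ 0 := ne_of_gt hG
    have h3 : m*(1+k/x) ≠ 0 := by positivity
    field_simp
  rw [hbinv]
  have hcoef := coef_bound m k γb x hm hk hγb hx n hmn hnm
  calc 8 * C1 * C2 * P * (Rn * Binv) * Real.exp (-x) * (2 * Binv)
      = (8 * C1 * C2) * (P * (Rn * Binv) * (2 * Binv)) * Real.exp (-x) := by ring
    _ ≤ (8 * C1 * C2) * ((2*(m^m/m^(n+2))*(max 1 m)^(2:ℝ)*(1+k)*γb) * ((1+x)^2 * x^(-((n:ℝ)+1-m)))) * Real.exp (-x) := by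
        apply mul_le_mul_of_nonneg_right _ (Real.exp_pos _).le
        apply mul_le_mul_of_nonneg_left _ (by rw [hC1def, hC2def]; positivity)
        simpa only [hPdef, hRndef, hBinvdef] using hcoef
    _ = ((8 * C1 * C2) * (2*(m^m/m^(n+2))*(max 1 m)^(2:ℝ)*(1+k)*γb)) *
          (((1+x)^2 * x^(-((n:ℝ)+1-m))) * Real.exp (-x)) := by ring

lemma maj_integrable (θ : ℝ) (hθ0 : 0 ≤ θ) (hθ1 : θ < 1) :
    IntegrableOn (fun x : ℝ => ((1+x)^2 * x^(-θ)) * Real.exp (-x)) (Ioi 0) := by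
  have h1 : (0:ℝ) < 1 - θ := by linarith
  have h2 : (0:ℝ) < 2 - θ := by linarith
  have h3 : (0:ℝ) < 3 - θ := by linarith
  have hg : IntegrableOn (fun x : ℝ =>
      Real.exp (-x) * x^((1-θ)-1) + (2 * (Real.exp (-x) * x^((2-θ)-1)) +
        Real.exp (-x) * x^((3-θ)-1))) (Ioi 0) :=
    (Real.GammaIntegral_convergent h1).add
      (((Real.GammaIntegral_convergent h2).const_mul 2).add
        (Real.GammaIntegral_convergent h3))
  apply Integrable.mono' hg
  · apply Measurable.aestronglyMeasurable
    exact (((measurable_id.const_add 1).pow_const 2).mul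
      (measurable_id.pow measurable_const)).mul (measurable_id.neg.exp)
  · filter_upwards [ae_restrict_mem measurableSet_Ioi] with x hx
    have hx0 : (0:ℝ) < x := hx
    rw [Real.norm_eq_abs, abs_of_nonneg (by positivity)]
    have e2 : x^((2-θ)-1) = x * x^(-θ) := by
      rw [show (2-θ)-1 = 1 + -θ by ring, Real.rpow_add hx0, Real.rpow_one]
    have e3 : x^((3-θ)-1) = x^(2:ℕ) * x^(-θ) := by
      rw [show (3-θ)-1 = ((2:ℕ):ℝ) + -θ by push_cast; ring, Real.rpow_add hx0,
        Real.rpow_natCast]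
    have e1 : x^((1-θ)-1) = x^(-θ) := by norm_num
    rw [e1, e2, e3]
    ring_nf
    apply le_of_eq
    ring

/-- The ORA ergodic capacity integrand `γ ↦ log₂(1+γ) f(γ)` is integrable on `(0,∞)`. -/
theorem ora_capacity_finite (m k γb : ℝ) (hm : 0 < m) (hk : 0 < k) (hγb : 0 < γb) :
    IntegrableOn (fun γ : ℝ => Real.logb 2 (1 + γ) * pdfSNR m k γb γ) (Ioi 0) := by
  have hd : 0 < ⌈m⌉₊ := Nat.ceil_pos.mpr hm
  set n := ⌈m⌉₊ - 1 with hndef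
  have hn1 : (n:ℝ)+1 = (⌈m⌉₊:ℝ) := by
    rw [hndef]
    push_cast [Nat.cast_sub hd]
    ring
  have hmn : m ≤ (n:ℝ)+1 := by rw [hn1]; exact Nat.le_ceil m
  have hnm : (n:ℝ) < m := by
    have := Nat.ceil_lt_add_one hm.le
    linarith [hn1]
  set θ := (n:ℝ)+1-m with hθdef
  have hθ0 : 0 ≤ θ := by rw [hθdef]; linarith
  have hθ1 : θ < 1 := by rw [hθdef]; linarith
  set Λ := ((8 * (((n:ℝ)+1)^(2*n)*((n:ℝ)+1)) * (4*(n:ℝ)+4)^n) *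
      (2*(m^m/m^(n+2))*(max 1 m)^(2:ℝ)*(1+k)*γb)) with hΛdef
  set F : ℝ × ℝ → ℝ :=
    fun p => Real.logb 2 (1+p.2) * (condPdf m k γb p.1 p.2 * Real.exp (-p.1)) with hFdef
  -- measurability
  have hq : Measurable (fun p : ℝ × ℝ => k / p.1) := measurable_const.div measurable_fst
  have hGm : Measurable (fun p : ℝ × ℝ => (k+p.1)/(k+1)*γb) :=
    ((measurable_const.add measurable_fst).div_const _).mul_const _
  have hmeasF : Measurable F := by
    rw [hFdef]
    apply Measurable.mul
    · simp only [Real.logb]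
      exact (Real.measurable_log.comp (measurable_const.add measurable_snd)).div_const _
    · apply Measurable.mul _ (Real.measurable_exp.comp measurable_fst.neg)
      simp only [condPdf]
      apply Measurable.mul
      apply Measurable.mul
      · exact (measurable_const.mul (measurable_const.add hq)).div
          (((measurable_const.add hq).pow measurable_const).mul hGm)
      · exact Real.measurable_exp.comp
          ((((measurable_const.add hq).div hGm).neg).mul measurable_snd)
      · exact (measurable_kummerM m hm).comp
          (((hq.mul (measurable_const.add hq)).div (hq.add measurable_const)).mul
            (measurable_snd.div hGm))
  -- nonnegativity a.e.
  have hae : 0 ≤ᵐ[(volume.restrict (Ioi 0)).prod (volume.restrict (Ioi 0))] F := by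
    rw [Measure.prod_restrict]
    filter_upwards [ae_restrict_mem (measurableSet_Ioi.prod measurableSet_Ioi)] with p hp
    have hx : (0:ℝ) < p.1 := hp.1
    have hγ : (0:ℝ) < p.2 := hp.2
    rw [hFdef]
    apply mul_nonneg (Real.logb_nonneg one_lt_two (by linarith))
    apply mul_nonneg _ (Real.exp_pos _).le
    simp only [condPdf]
    apply mul_nonneg (mul_nonneg (by positivity) (Real.exp_pos _).le)
    exact kummerM_nonneg hm (by positivity)
  -- integrability on the product
  have key : Integrable F ((volume.restrict (Ioi 0)).prod (volume.restrict (Ioi 0))) := by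
    refine ⟨hmeasF.aestronglyMeasurable, ?_⟩
    rw [hasFiniteIntegral_iff_ofReal hae]
    rw [lintegral_prod (fun z : ℝ × ℝ => ENNReal.ofReal (F z))
      ((ENNReal.measurable_ofReal.comp hmeasF).aemeasurable)]
    have hb1 : ∫⁻ x in Ioi (0:ℝ), (∫⁻ γ in Ioi (0:ℝ), ENNReal.ofReal (F (x, γ)))
        ≤ ∫⁻ x in Ioi (0:ℝ), ENNReal.ofReal (Λ * (((1+x)^2 * x^(-θ)) * Real.exp (-x))) := by
      apply lintegral_mono_ae
      filter_upwards [ae_restrict_mem measurableSet_Ioi] with x hx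
      have := slice_bound m k γb hm hk hγb n hmn hnm.le hx
      simpa only [hFdef, hΛdef, hθdef] using this
    refine lt_of_le_of_lt hb1 ?_
    have hint : Integrable (fun x => Λ * (((1+x)^2 * x^(-θ)) * Real.exp (-x)))
        (volume.restrict (Ioi 0)) := (maj_integrable θ hθ0 hθ1).const_mul Λ
    refine lt_of_le_of_lt (lintegral_mono fun x => Real.ofReal_le_enorm _) ?_
    exact hint.2
  have h2 := key.integral_prod_right
  have heq : (fun γ => ∫ x, F (x, γ) ∂(volume.restrict (Ioi 0)))
      = fun γ : ℝ => Real.logb 2 (1 + γ) * pdfSNR m k γb γ := by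
    funext γ
    rw [hFdef]
    simp only
    rw [MeasureTheory.integral_const_mul]
    rfl
  rw [IntegrableOn, ← heq]
  exact h2
end
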